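/- Bishop-type discs have embedded boundary and are simple: let t ∈ (−1,1) and let u be a smooth holomorphic disc with boundary on S^t ∖ {q₊^t, q₋^t} of winding number one. Then the restriction of u to the unit circle is injective, and u is simple: there do not exist two disjoint nonempty relatively open subsets U, V of 𝔻 with u(U) = u(V). -/

import Mathlib

open Metric Complex

/-- A smooth holomorphic disc with boundary on a set `S ⊆ S³ ⊆ ℂ²`: a map `ℂ → ℂ²`
which is `C^∞` on an open neighbourhood of the closed unit disc, holomorphic on the open
unit disc, nonconstant on the closed unit disc, and maps the unit circle into `S`. -/
def IsHolomorphicDisc (u : ℂ → ℂ × ℂ) (S : Set (ℂ × ℂ)) : Prop :=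
  (∃ V : Set ℂ, IsOpen V ∧ closedBall (0 : ℂ) 1 ⊆ V ∧ ContDiffOn ℝ (⊤ : ℕ∞) u V) ∧
  DifferentiableOn ℂ u (ball (0 : ℂ) 1) ∧
  (¬ ∃ c : ℂ × ℂ, ∀ z ∈ closedBall (0 : ℂ) 1, u z = c) ∧
  ∀ z : ℂ, ‖z‖ = 1 → u z ∈ S

/-- The derivative `u′ = ∂u/∂x` of a disc `u : ℂ → ℂ²`. -/
noncomputable def discDeriv (u : ℂ → ℂ × ℂ) (z : ℂ) : ℂ × ℂ :=
  fderiv ℝ u z 1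

/-- The punctured level sphere `S^t ∖ {q₊^t, q₋^t} = {(z₁,z₂) ∈ S³ : Im z₂ = t, z₁ ≠ 0}`. -/
def puncturedLevelSphere (t : ℝ) : Set (ℂ × ℂ) :=
  {p : ℂ × ℂ | ‖p.1‖ ^ 2 + ‖p.2‖ ^ 2 = 1 ∧ p.2.im = t ∧ p.1 ≠ 0}

/-- The disc `u` has winding number one: its first component `w` satisfies
`(2πi)⁻¹ ∮_{|z|=1} w′(z)/w(z) dz = 1`. -/
def WindingNumberOne (u : ℂ → ℂ × ℂ) : Prop :=
  (2 * (Real.pi : ℂ) * Complex.I)⁻¹ *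
    (∮ z in C(0, 1), (discDeriv u z).1 / (u z).1) = 1

/-- A subset of the closed unit disc `𝔻 ⊆ ℂ` which is relatively open in `𝔻`. -/
def IsRelOpenInDisc (U : Set ℂ) : Prop :=
  U ⊆ closedBall (0 : ℂ) 1 ∧ ∃ O : Set ℂ, IsOpen O ∧ U = O ∩ closedBall (0 : ℂ) 1

/-- A map `u` defined on the closed unit disc is *simple* if there do not exist two
disjoint nonempty relatively open subsets `U, V` of `𝔻` with `u(U) = u(V)`. -/
def IsSimpleDisc (u : ℂ → ℂ × ℂ) : Prop :=
  ¬ ∃ U V : Set ℂ, IsRelOpenInDisc U ∧ IsRelOpenInDisc V ∧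
      U.Nonempty ∧ V.Nonempty ∧ Disjoint U V ∧ u '' U = u '' V

namespace BishopAux
open Set Filter Topology

noncomputable section

lemma one_mem_sphere : (1 : ℂ) ∈ sphere (0:ℂ) 1 := by
  simp [mem_sphere_zero_iff_norm]

lemma eqOn_closedBall {f : ℂ → ℂ} {c : ℂ} (hf : ContinuousOn f (closedBall (0:ℂ) 1))
    (h : ∀ z ∈ ball (0:ℂ) 1, f z = c) : ∀ z ∈ closedBall (0:ℂ) 1, f z = c := by
  intro z hz
  have hz' : z ∈ closure (ball (0:ℂ) 1) := by
    rwa [closure_ball (0:ℂ) one_ne_zero]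
  have hne : (𝓝[ball (0:ℂ) 1] z).NeBot := mem_closure_iff_nhdsWithin_neBot.mp hz'
  have h2 : Tendsto f (𝓝[ball (0:ℂ) 1] z) (𝓝 (f z)) :=
    (hf z hz).mono_left (nhdsWithin_mono z ball_subset_closedBall)
  have h3 : Tendsto f (𝓝[ball (0:ℂ) 1] z) (𝓝 c) := by
    refine Tendsto.congr' ?_ tendsto_const_nhds
    exact eventually_nhdsWithin_of_forall fun w hw => (h w hw).symm
  exact tendsto_nhds_unique h2 h3

lemma const_of_norm_sphere {f : ℂ → ℂ} {r : ℝ} (hr : 0 < r)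
    (hc : ContinuousOn f (closedBall (0:ℂ) 1))
    (hd : DifferentiableOn ℂ f (ball (0:ℂ) 1))
    (hne : ∀ z ∈ closedBall (0:ℂ) 1, f z ≠ 0)
    (hb : ∀ z ∈ sphere (0:ℂ) 1, ‖f z‖ = r) :
    ∀ z ∈ closedBall (0:ℂ) 1, f z = f 0 := by
  have hcl : closure (ball (0:ℂ) 1) = closedBall (0:ℂ) 1 := closure_ball (0:ℂ) one_ne_zero
  have hfr : frontier (ball (0:ℂ) 1) = sphere (0:ℂ) 1 := frontier_ball (0:ℂ) one_ne_zero
  have hdc : DiffContOnCl ℂ f (ball (0:ℂ) 1) := ⟨hd, by rw [hcl]; exact hc⟩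
  have hub : ∀ z ∈ closedBall (0:ℂ) 1, ‖f z‖ ≤ r := by
    intro z hz
    refine Complex.norm_le_of_forall_mem_frontier_norm_le isBounded_ball hdc ?_ (by rw [hcl]; exact hz)
    intro w hw; rw [hfr] at hw; exact (hb w hw).le
  have hdc' : DiffContOnCl ℂ (fun z => (f z)⁻¹) (ball (0:ℂ) 1) := by
    refine ⟨hd.inv (fun z hz => hne z (ball_subset_closedBall hz)), ?_⟩
    rw [hcl]; exact hc.inv₀ hne
  have hnorm : ∀ z ∈ closedBall (0:ℂ) 1, ‖f z‖ = r := by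
    intro z hz
    have hinv : ‖(f z)⁻¹‖ ≤ r⁻¹ := by
      refine Complex.norm_le_of_forall_mem_frontier_norm_le isBounded_ball hdc' ?_ (by rw [hcl]; exact hz)
      intro w hw; rw [hfr] at hw
      rw [norm_inv, (hb w hw)]
    have hfz : (0:ℝ) < ‖f z‖ := norm_pos_iff.mpr (hne z hz)
    rw [norm_inv] at hinv
    have hlb : r ≤ ‖f z‖ := by
      have e1 : ‖f z‖ * ‖f z‖⁻¹ = 1 := mul_inv_cancel₀ hfz.ne'
      have e2 : r * r⁻¹ = 1 := mul_inv_cancel₀ hr.ne'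
      nlinarith [mul_le_mul_of_nonneg_left hinv (le_of_lt (mul_pos hr hfz))]
    exact le_antisymm (hub z hz) hlb
  have hmax : IsMaxOn (norm ∘ f) (ball (0:ℂ) 1) 0 := by
    intro z hz
    simp only [Set.mem_setOf_eq, Function.comp_apply]
    rw [hnorm z (ball_subset_closedBall hz), hnorm 0 (mem_closedBall_self zero_le_one)]
  have heq := Complex.eqOn_of_isPreconnected_of_isMaxOn_norm
    (convex_ball (0:ℂ) 1).isPreconnected isOpen_ball hd (mem_ball_self one_pos) hmax
  exact eqOn_closedBall hc (fun z hz => heq hz)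

lemma snd_const {t : ℝ} {u : ℂ → ℂ × ℂ}
    (hcont : ContinuousOn u (closedBall (0:ℂ) 1))
    (hdiff : DifferentiableOn ℂ u (ball (0:ℂ) 1))
    (him : ∀ z ∈ sphere (0:ℂ) 1, ((u z).2).im = t) :
    ∀ z ∈ closedBall (0:ℂ) 1, (u z).2 = (u 0).2 := by
  set v : ℂ → ℂ := fun z => (u z).2 with hv
  have hvc : ContinuousOn v (closedBall (0:ℂ) 1) := hcont.snd
  have hvd : DifferentiableOn ℂ v (ball (0:ℂ) 1) := hdiff.snd
  set f : ℂ → ℂ := fun z => Complex.exp (Complex.I * v z) with hf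
  have hfc : ContinuousOn f (closedBall (0:ℂ) 1) :=
    Complex.continuous_exp.comp_continuousOn (continuousOn_const.mul hvc)
  have hfd : DifferentiableOn ℂ f (ball (0:ℂ) 1) :=
    fun z hz => ((hvd z hz).const_mul Complex.I).cexp
  have hfne : ∀ z ∈ closedBall (0:ℂ) 1, f z ≠ 0 := fun z _ => Complex.exp_ne_zero _
  have hnormf : ∀ z : ℂ, ‖f z‖ = Real.exp (-(v z).im) := by
    intro z
    rw [hf]
    rw [Complex.norm_exp]
    congr 1
    simp [Complex.mul_re, Complex.I_re, Complex.I_im]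
  have hb : ∀ z ∈ sphere (0:ℂ) 1, ‖f z‖ = Real.exp (-t) := by
    intro z hz; rw [hnormf z, him z hz]
  have hconst := const_of_norm_sphere (Real.exp_pos (-t)) hfc hfd hfne hb
  have hvim : ∀ z ∈ closedBall (0:ℂ) 1, (v z).im = t := by
    intro z hz
    have h1 : f 1 = f 0 := hconst 1 (sphere_subset_closedBall one_mem_sphere)
    have h2 : ‖f z‖ = Real.exp (-t) := by
      rw [hconst z hz, ← h1, hb 1 one_mem_sphere]
    rw [hnormf z, Real.exp_eq_exp] at h2
    linarith
  have han : AnalyticOnNhd ℂ v (ball (0:ℂ) 1) := hvd.analyticOnNhd isOpen_ball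
  rcases han.is_constant_or_isOpen (convex_ball (0:ℂ) 1).isPreconnected with ⟨w, hw⟩ | hopen
  · have h0 : v 0 = w := hw 0 (mem_ball_self one_pos)
    exact fun z hz => eqOn_closedBall hvc (fun z hz => (hw z hz).trans h0.symm) z hz
  · exfalso
    have himg : IsOpen (v '' ball (0:ℂ) 1) := hopen _ Subset.rfl isOpen_ball
    have hmem : v 0 ∈ v '' ball (0:ℂ) 1 := ⟨0, mem_ball_self one_pos, rfl⟩
    rcases Metric.isOpen_iff.mp himg _ hmem with ⟨ε, hε, hsub⟩
    have hpt : v 0 + (↑(ε/2) : ℂ) * Complex.I ∈ v '' ball (0:ℂ) 1 := by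
      apply hsub
      simp only [mem_ball, dist_eq_norm, add_sub_cancel_left]
      rw [norm_mul, Complex.norm_I, mul_one, Complex.norm_real, Real.norm_eq_abs,
        abs_of_pos (by linarith)]
      linarith
    rcases hpt with ⟨z, hz, hzeq⟩
    have h1 : (v z).im = t := hvim z (ball_subset_closedBall hz)
    have h2 : (v 0).im = t := hvim 0 (mem_closedBall_self zero_le_one)
    have h3 : (v 0 + (↑(ε/2) : ℂ) * Complex.I).im = t + ε/2 := by
      simp [Complex.add_im, Complex.mul_im, h2]
    rw [hzeq, h3] at h1
    linarith

lemma zeros_finite {f : ℂ → ℂ}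
    (hc : ContinuousOn f (closedBall (0:ℂ) 1))
    (hd : DifferentiableOn ℂ f (ball (0:ℂ) 1))
    (hs : ∀ z ∈ sphere (0:ℂ) 1, f z ≠ 0) :
    {z ∈ ball (0:ℂ) 1 | f z = 0}.Finite := by
  by_contra hinf
  set Z := {z ∈ ball (0:ℂ) 1 | f z = 0} with hZ
  have hZsub : Z ⊆ closedBall (0:ℂ) 1 := fun z hz => ball_subset_closedBall hz.1
  have hinf' : Z.Infinite := hinf
  obtain ⟨x, hxK, hx⟩ := hinf'.exists_accPt_of_subset_isCompact
    (isCompact_closedBall (0:ℂ) 1) hZsub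
  have hfreq : ∃ᶠ y in 𝓝 x, y ≠ x ∧ y ∈ Z := accPt_iff_frequently.mp hx
  have hfx : f x = 0 := by
    have hnb : (𝓝[closedBall (0:ℂ) 1] x).NeBot :=
      mem_closure_iff_nhdsWithin_neBot.mp (subset_closure hxK)
    have hfreq2 : ∃ᶠ y in 𝓝[closedBall (0:ℂ) 1] x, f y = 0 := by
      rw [frequently_nhdsWithin_iff]
      exact hfreq.mono fun y hy => ⟨hy.2.2, hZsub hy.2⟩
    exact tendsto_nhds_unique_of_frequently_eq (hc x hxK) tendsto_const_nhds hfreq2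
  have hxball : x ∈ ball (0:ℂ) 1 := by
    rcases (by rw [ball_union_sphere]; exact hxK : x ∈ ball (0:ℂ) 1 ∪ sphere (0:ℂ) 1) with h | h
    · exact h
    · exact absurd hfx (hs x h)
  have hfreq3 : ∃ᶠ y in 𝓝[≠] x, f y = 0 := by
    rw [frequently_nhdsWithin_iff]
    exact hfreq.mono fun y hy => ⟨hy.2.2, hy.1⟩
  have han : AnalyticOnNhd ℂ f (ball (0:ℂ) 1) := hd.analyticOnNhd isOpen_ball
  have hzero : EqOn f 0 (ball (0:ℂ) 1) :=
    han.eqOn_zero_of_preconnected_of_frequently_eq_zero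
      (convex_ball (0:ℂ) 1).isPreconnected hxball hfreq3
  have : f 1 = 0 :=
    eqOn_closedBall hc (fun z hz => hzero hz) 1 (sphere_subset_closedBall one_mem_sphere)
  exact hs 1 one_mem_sphere this


lemma winding_zero {f D : ℂ → ℂ}
    (hc : ContinuousOn f (closedBall (0:ℂ) 1))
    (hD : ContinuousOn D (closedBall (0:ℂ) 1))
    (hder : ∀ z ∈ ball (0:ℂ) 1, HasDerivAt f (D z) z)
    (hzero : ∀ z ∈ closedBall (0:ℂ) 1, f z ≠ 0) :
    (∮ z in C(0, 1), D z / f z) = 0 := by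
  have hDf : DifferentiableOn ℂ f (ball (0:ℂ) 1) :=
    fun z hz => ((hder z hz).differentiableAt).differentiableWithinAt
  have han : AnalyticOnNhd ℂ f (ball (0:ℂ) 1) := hDf.analyticOnNhd isOpen_ball
  have hder' : AnalyticOnNhd ℂ (deriv f) (ball (0:ℂ) 1) := han.deriv
  refine Complex.circleIntegral_eq_zero_of_differentiable_on_off_countable zero_le_one
    Set.countable_empty (hD.div hc hzero) ?_
  rintro z ⟨hz, -⟩
  have h1 : DifferentiableAt ℂ (fun w => deriv f w / f w) z :=
    ((hder' z hz).differentiableAt).div ((han z hz).differentiableAt)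
      (hzero z (ball_subset_closedBall hz))
  refine h1.congr_of_eventuallyEq ?_
  filter_upwards [isOpen_ball.mem_nhds hz] with w hw
  rw [(hder w hw).deriv]

lemma winding_factor : ∀ (N : ℕ) (f D : ℂ → ℂ),
    ContinuousOn f (closedBall (0:ℂ) 1) →
    ContinuousOn D (closedBall (0:ℂ) 1) →
    (∀ z ∈ ball (0:ℂ) 1, HasDerivAt f (D z) z) →
    (∀ z ∈ sphere (0:ℂ) 1, f z ≠ 0) →
    {z ∈ ball (0:ℂ) 1 | f z = 0}.Finite →
    {z ∈ ball (0:ℂ) 1 | f z = 0}.ncard ≤ N →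
    ∃ n : ℕ, (∮ z in C(0, 1), D z / f z) = 2 * Real.pi * Complex.I * n ∧
      (n = 0 → ∀ z ∈ closedBall (0:ℂ) 1, f z ≠ 0) ∧
      (n = 1 → ∃ a ∈ ball (0:ℂ) 1, ∃ g : ℂ → ℂ,
        ContinuousOn g (closedBall (0:ℂ) 1) ∧ DifferentiableOn ℂ g (ball (0:ℂ) 1) ∧
        (∀ z ∈ closedBall (0:ℂ) 1, g z ≠ 0) ∧
        ∀ z ∈ closedBall (0:ℂ) 1, f z = (z - a) * g z) := by
  intro N
  induction N with
  | zero =>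
    intro f D hc hD hder hsph hfin hcard
    by_cases hex : ∃ a ∈ ball (0:ℂ) 1, f a = 0
    · exfalso
      obtain ⟨a, ha, hfa⟩ := hex
      have : 0 < ({z ∈ ball (0:ℂ) 1 | f z = 0}).ncard :=
        (Set.ncard_pos hfin).mpr ⟨a, ha, hfa⟩
      omega
    · push_neg at hex
      have hzero : ∀ z ∈ closedBall (0:ℂ) 1, f z ≠ 0 := by
        intro z hz
        rcases (by rw [ball_union_sphere]; exact hz : z ∈ ball (0:ℂ) 1 ∪ sphere (0:ℂ) 1) with h | h
        · exact hex z h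
        · exact hsph z h
      refine ⟨0, ?_, fun _ => hzero, fun h => absurd h (by norm_num)⟩
      rw [winding_zero hc hD hder hzero]
      simp
  | succ N IH =>
    intro f D hc hD hder hsph hfin hcard
    by_cases hex : ∃ a ∈ ball (0:ℂ) 1, f a = 0
    swap
    · push_neg at hex
      have hzero : ∀ z ∈ closedBall (0:ℂ) 1, f z ≠ 0 := by
        intro z hz
        rcases (by rw [ball_union_sphere]; exact hz : z ∈ ball (0:ℂ) 1 ∪ sphere (0:ℂ) 1) with h | h
        · exact hex z h
        · exact hsph z h
      refine ⟨0, ?_, fun _ => hzero, fun h => absurd h (by norm_num)⟩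
      rw [winding_zero hc hD hder hzero]
      simp
    obtain ⟨a, ha, hfa⟩ := hex
    have hDf : DifferentiableOn ℂ f (ball (0:ℂ) 1) :=
      fun z hz => ((hder z hz).differentiableAt).differentiableWithinAt
    have han : AnalyticOnNhd ℂ f (ball (0:ℂ) 1) := hDf.analyticOnNhd isOpen_ball
    have hfa_an : AnalyticAt ℂ f a := han a ha
    have hne1 : f 1 ≠ 0 := hsph 1 one_mem_sphere
    have hnot_top : analyticOrderAt f a ≠ ⊤ := by
      intro htop
      have hev : ∀ᶠ z in 𝓝 a, f z = 0 := analyticOrderAt_eq_top.mp htop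
      have hzero : EqOn f 0 (ball (0:ℂ) 1) :=
        han.eqOn_zero_of_preconnected_of_eventuallyEq_zero
          (convex_ball (0:ℂ) 1).isPreconnected ha hev
      exact hne1 (eqOn_closedBall hc (fun z hz => hzero hz) 1
        (sphere_subset_closedBall one_mem_sphere))
    set k := (analyticOrderAt f a).toNat with hkdef
    have horder : analyticOrderAt f a = (k : ℕ∞) := (ENat.coe_toNat hnot_top).symm
    obtain ⟨h, hh_an, hh0, hfeq⟩ := (hfa_an.analyticOrderAt_eq_natCast).mp horder
    have hk : k ≠ 0 := by
      intro hk0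
      have h2 : f a = h a := by simpa [hk0] using hfeq.self_of_nhds
      exact hh0 (h2 ▸ hfa)
    obtain ⟨m, hm⟩ : ∃ m, k = m + 1 := ⟨k - 1, by omega⟩
    rw [hm] at hfeq
    clear hk horder hkdef
    set g : ℂ → ℂ := fun z => if z = a then h a else f z / (z - a) ^ (m + 1) with hgdef
    have hgh : g =ᶠ[𝓝 a] h := by
      filter_upwards [hfeq] with z hz
      by_cases hza : z = a
      · subst hza; simp [hgdef]
      · have hpow : (z - a) ^ (m + 1) ≠ 0 := pow_ne_zero _ (sub_ne_zero.mpr hza)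
        simp only [hgdef, if_neg hza]
        rw [hz, smul_eq_mul]
        field_simp
    have hg_an : AnalyticAt ℂ g a := hh_an.congr hgh.symm
    have hga : g a = h a := by simp [hgdef]
    have hfg : ∀ z : ℂ, f z = (z - a) ^ (m + 1) * g z := by
      intro z
      by_cases hza : z = a
      · subst hza; simp [hgdef, hfa]
      · have hpow : (z - a) ^ (m + 1) ≠ 0 := pow_ne_zero _ (sub_ne_zero.mpr hza)
        simp only [hgdef, if_neg hza]
        field_simp
    have hg_cont : ContinuousOn g (closedBall (0:ℂ) 1) := by
      intro z hz
      by_cases hza : z = a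
      · subst hza; exact hg_an.continuousAt.continuousWithinAt
      · have hpow : (z - a) ^ (m + 1) ≠ 0 := pow_ne_zero _ (sub_ne_zero.mpr hza)
        have hcw : ContinuousWithinAt (fun w => f w / (w - a) ^ (m + 1)) (closedBall (0:ℂ) 1) z :=
          (hc z hz).div (((continuous_id.sub continuous_const).pow _).continuousWithinAt) hpow
        refine hcw.congr_of_eventuallyEq ?_ (by simp [hgdef, if_neg hza])
        refine mem_nhdsWithin_of_mem_nhds ?_
        filter_upwards [isOpen_ne.mem_nhds hza] with w hw
        simp [hgdef, if_neg hw]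
    have hg_diff : DifferentiableOn ℂ g (ball (0:ℂ) 1) := by
      intro z hz
      by_cases hza : z = a
      · subst hza; exact hg_an.differentiableAt.differentiableWithinAt
      · have hd1 : DifferentiableAt ℂ (fun w => f w / (w - a) ^ (m + 1)) z :=
          (hDf.differentiableAt (isOpen_ball.mem_nhds hz)).div
            ((differentiableAt_id.sub_const a).pow _)
            (pow_ne_zero _ (sub_ne_zero.mpr hza))
        refine (hd1.congr_of_eventuallyEq ?_).differentiableWithinAt
        filter_upwards [isOpen_ne.mem_nhds hza] with w hw
        simp [hgdef, if_neg hw]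
    set Dg : ℂ → ℂ := fun z => if z = a then deriv g a
        else (D z - ((m:ℂ) + 1) * (z - a) ^ m * g z) / (z - a) ^ (m + 1) with hDgdef
    have hgder : ∀ z ∈ ball (0:ℂ) 1, HasDerivAt g (Dg z) z := by
      intro z hz
      by_cases hza : z = a
      · subst hza
        have := hg_an.differentiableAt.hasDerivAt
        simpa [hDgdef] using this
      · have hzan : z - a ≠ 0 := sub_ne_zero.mpr hza
        have hpow : (z - a) ^ (m + 1) ≠ 0 := pow_ne_zero _ hzan
        have hpden : HasDerivAt (fun w => (w - a) ^ (m + 1)) (((m:ℂ) + 1) * (z - a) ^ m) z := by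
          have := ((hasDerivAt_id z).sub_const a).pow (m + 1)
          simp at this
          exact this
        have hdiv : HasDerivAt (fun w => f w / (w - a) ^ (m + 1))
            ((D z * (z - a) ^ (m + 1) - f z * (((m:ℂ) + 1) * (z - a) ^ m)) /
              ((z - a) ^ (m + 1)) ^ 2) z := (hder z hz).div hpden hpow
        have hgz : HasDerivAt g
            ((D z * (z - a) ^ (m + 1) - f z * (((m:ℂ) + 1) * (z - a) ^ m)) /
              ((z - a) ^ (m + 1)) ^ 2) z := by
          refine hdiv.congr_of_eventuallyEq ?_
          filter_upwards [isOpen_ne.mem_nhds hza] with w hw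
          simp [hgdef, if_neg hw]
        convert hgz using 1
        simp only [hDgdef, if_neg hza]
        rw [hfg z]
        field_simp
    have hDg_cont : ContinuousOn Dg (closedBall (0:ℂ) 1) := by
      intro z hz
      by_cases hza : z = a
      · have key : ContinuousAt Dg a := by
          obtain ⟨U, hUsub, hUopen, haU⟩ := _root_.mem_nhds_iff.mp hg_an.eventually_analyticAt
          have hanU : AnalyticOnNhd ℂ g U := fun w hw => hUsub hw
          have hdg_cont : ContinuousAt (deriv g) a :=
            ((hanU.deriv) a haU).continuousAt
          have heq : Dg =ᶠ[𝓝 a] deriv g := by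
            filter_upwards [isOpen_ball.mem_nhds ha] with w hw
            by_cases hwa : w = a
            · rw [hwa]; simp [hDgdef]
            · rw [(hgder w hw).deriv]
          exact hdg_cont.congr heq.symm
        rw [hza]
        exact key.continuousWithinAt
      · have hzan : z - a ≠ 0 := sub_ne_zero.mpr hza
        have hpow : (z - a) ^ (m + 1) ≠ 0 := pow_ne_zero _ hzan
        have hcw : ContinuousWithinAt
            (fun w => (D w - ((m:ℂ) + 1) * (w - a) ^ m * g w) / (w - a) ^ (m + 1))
            (closedBall (0:ℂ) 1) z := by
          refine ContinuousWithinAt.div ?_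
            (((continuous_id.sub continuous_const).pow _).continuousWithinAt) hpow
          exact (hD z hz).sub
            ((continuousWithinAt_const.mul
              (((continuous_id.sub continuous_const).pow _).continuousWithinAt)).mul
              (hg_cont z hz))
        refine hcw.congr_of_eventuallyEq ?_ (by simp [hDgdef, if_neg hza])
        refine mem_nhdsWithin_of_mem_nhds ?_
        filter_upwards [isOpen_ne.mem_nhds hza] with w hw
        simp [hDgdef, if_neg hw]
    have hza_s : ∀ z ∈ sphere (0:ℂ) 1, z ≠ a := by
      intro z hzs h
      have h1 : ‖z‖ = 1 := mem_sphere_zero_iff_norm.mp hzs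
      have h2 : ‖a‖ < 1 := mem_ball_zero_iff.mp ha
      rw [h] at h1; linarith
    have hgs : ∀ z ∈ sphere (0:ℂ) 1, g z ≠ 0 := by
      intro z hzs hg0
      exact hsph z hzs (by rw [hfg z, hg0, mul_zero])
    have hintg : EqOn (fun z => D z / f z)
        (fun z => ((m:ℂ) + 1) * (z - a)⁻¹ + Dg z / g z) (sphere (0:ℂ) 1) := by
      intro z hzs
      have hza := hza_s z hzs
      have hzan : z - a ≠ 0 := sub_ne_zero.mpr hza
      have hgz := hgs z hzs
      simp only [hDgdef, if_neg hza]
      rw [hfg z]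
      field_simp
      ring
    have hi1 : CircleIntegrable (fun z => ((m:ℂ) + 1) * (z - a)⁻¹) 0 1 := by
      refine ContinuousOn.circleIntegrable zero_le_one ?_
      refine continuousOn_const.mul (ContinuousOn.inv₀
        ((continuous_id.sub continuous_const).continuousOn) ?_)
      exact fun z hz => sub_ne_zero.mpr (hza_s z hz)
    have hi2 : CircleIntegrable (fun z => Dg z / g z) 0 1 := by
      refine ContinuousOn.circleIntegrable zero_le_one ?_
      exact (hDg_cont.mono sphere_subset_closedBall).div
        (hg_cont.mono sphere_subset_closedBall) hgs
    have hstep : (∮ z in C(0, 1), D z / f z) =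
        ((m:ℂ) + 1) * (2 * Real.pi * Complex.I) + (∮ z in C(0, 1), Dg z / g z) := by
      rw [circleIntegral.integral_congr zero_le_one hintg]
      have hsub := circleIntegral.integral_sub (hi1.add hi2) hi1
      have hcongr : (∮ z in C(0, 1),
          ((((m:ℂ) + 1) * (z - a)⁻¹ + Dg z / g z) - ((m:ℂ) + 1) * (z - a)⁻¹)) =
          (∮ z in C(0, 1), Dg z / g z) := by
        apply circleIntegral.integral_congr zero_le_one
        intro z _
        ring
      simp only [Pi.add_apply] at hsub
      rw [hcongr] at hsub
      have h1 : (∮ z in C(0, 1), ((m:ℂ) + 1) * (z - a)⁻¹) =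
          ((m:ℂ) + 1) * (2 * Real.pi * Complex.I) := by
        rw [circleIntegral.integral_const_mul, circleIntegral.integral_sub_inv_of_mem_ball ha]
      rw [h1] at hsub
      linear_combination -hsub
    have hZg : {z ∈ ball (0:ℂ) 1 | g z = 0} = {z ∈ ball (0:ℂ) 1 | f z = 0} \ {a} := by
      ext z
      constructor
      · rintro ⟨hz, hg0⟩
        have hza : z ≠ a := by
          intro hEq; rw [hEq, hga] at hg0; exact hh0 hg0
        exact ⟨⟨hz, by rw [hfg z, hg0, mul_zero]⟩, by simpa using hza⟩
      · rintro ⟨⟨hz, hf0⟩, hza⟩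
        have hza' : z ≠ a := by simpa using hza
        refine ⟨hz, ?_⟩
        have h2 := hfg z
        rw [hf0] at h2
        exact (mul_eq_zero.mp h2.symm).resolve_left
          (pow_ne_zero _ (sub_ne_zero.mpr hza'))
    have hmemZ : a ∈ {z ∈ ball (0:ℂ) 1 | f z = 0} := ⟨ha, hfa⟩
    have hfing : {z ∈ ball (0:ℂ) 1 | g z = 0}.Finite := by
      rw [hZg]; exact hfin.diff
    have hcardg : {z ∈ ball (0:ℂ) 1 | g z = 0}.ncard ≤ N := by
      rw [hZg]
      have h1 : ({z ∈ ball (0:ℂ) 1 | f z = 0} \ {a}).ncard =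
          {z ∈ ball (0:ℂ) 1 | f z = 0}.ncard - 1 :=
        Set.ncard_diff_singleton_of_mem hmemZ
      have h2 : 0 < {z ∈ ball (0:ℂ) 1 | f z = 0}.ncard := (Set.ncard_pos hfin).mpr ⟨a, hmemZ⟩
      omega
    obtain ⟨n', hint', h0', h1'⟩ := IH g Dg hg_cont hDg_cont hgder hgs hfing hcardg
    refine ⟨(m + 1) + n', ?_, ?_, ?_⟩
    · rw [hstep, hint']
      push_cast
      ring
    · intro hcontra; exact absurd hcontra (by omega)
    · intro hone
      have hm0 : m = 0 := by omega
      have hn'0 : n' = 0 := by omega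
      subst hm0
      refine ⟨a, ha, g, hg_cont, hg_diff, h0' hn'0, ?_⟩
      intro z hz
      have := hfg z
      rwa [pow_one] at this

end

end BishopAux

/-- Bishop-type discs have embedded boundary and are simple: a smooth holomorphic disc
with boundary on the punctured level sphere `S^t ∖ {q₊^t, q₋^t}` of winding number one is
injective on the unit circle, and it is simple. -/
theorem bishop_disc_boundary_injective_and_simple (t : ℝ) (ht : t ∈ Set.Ioo (-1 : ℝ) 1)
    (u : ℂ → ℂ × ℂ)
    (hu : IsHolomorphicDisc u (puncturedLevelSphere t))
    (hw : WindingNumberOne u) :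
    Set.InjOn u (sphere (0 : ℂ) 1) ∧ IsSimpleDisc u := by
  obtain ⟨⟨V, hVo, hVsub, hVsm⟩, hdiff, hnc, hbound⟩ := hu
  have hbd : ∀ z ∈ sphere (0:ℂ) 1, u z ∈ puncturedLevelSphere t := by
    intro z hz
    apply hbound
    exact mem_sphere_zero_iff_norm.mp hz
  have hucont : ContinuousOn u (closedBall (0:ℂ) 1) := (hVsm.continuousOn).mono hVsub
  have him : ∀ z ∈ sphere (0:ℂ) 1, ((u z).2).im = t := fun z hz => (hbd z hz).2.1
  have hsnd := BishopAux.snd_const hucont hdiff him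
  set c2 := (u 0).2 with hc2
  have h1s : (1:ℂ) ∈ sphere (0:ℂ) 1 := BishopAux.one_mem_sphere
  have hr2 : ∀ z ∈ sphere (0:ℂ) 1, (‖(u z).1‖)^2 = 1 - (‖c2‖)^2 := by
    intro z hz
    have h := (hbd z hz).1
    have h2 := hsnd z (sphere_subset_closedBall hz)
    rw [h2] at h
    linarith
  set r := Real.sqrt (1 - (‖c2‖)^2) with hrdef
  have hrpos : 0 < r := by
    apply Real.sqrt_pos.mpr
    have h1 := hr2 1 h1s
    have habs : 0 < ‖(u 1).1‖ := norm_pos_iff.mpr ((hbd 1 h1s).2.2)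
    nlinarith
  have hnorm_s : ∀ z ∈ sphere (0:ℂ) 1, ‖(u z).1‖ = r := by
    intro z hz
    rw [hrdef, ← hr2 z hz]
    exact (Real.sqrt_sq (norm_nonneg _)).symm
  set f : ℂ → ℂ := fun z => (u z).1 with hfdef
  set D : ℂ → ℂ := fun z => (fderiv ℝ u z 1).1 with hDdef
  have hfc : ContinuousOn f (closedBall (0:ℂ) 1) := hucont.fst
  have hDc : ContinuousOn D (closedBall (0:ℂ) 1) := by
    have h1 : ContinuousOn (fderiv ℝ u) V := hVsm.continuousOn_fderiv_of_isOpen hVo (by simp)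
    have h2 : ContinuousOn (fun z => fderiv ℝ u z 1) V := h1.clm_apply continuousOn_const
    exact (h2.fst).mono hVsub
  have hder : ∀ z ∈ ball (0:ℂ) 1, HasDerivAt f (D z) z := by
    intro z hz
    have hua : DifferentiableAt ℂ u z := hdiff.differentiableAt (isOpen_ball.mem_nhds hz)
    have h2 : HasFDerivAt f ((ContinuousLinearMap.fst ℂ ℂ ℂ).comp (fderiv ℂ u z)) z :=
      (ContinuousLinearMap.fst ℂ ℂ ℂ).hasFDerivAt.comp z hua.hasFDerivAt
    have h3 := h2.hasDerivAt
    have h4 : D z = (fderiv ℂ u z 1).1 := by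
      simp only [hDdef]
      rw [hua.fderiv_restrictScalars ℝ]
      rfl
    rw [h4]
    exact h3
  have hfs : ∀ z ∈ sphere (0:ℂ) 1, f z ≠ 0 := fun z hz => (hbd z hz).2.2
  have hfd : DifferentiableOn ℂ f (ball (0:ℂ) 1) :=
    fun z hz => ((hder z hz).differentiableAt).differentiableWithinAt
  have hfin := BishopAux.zeros_finite hfc hfd hfs
  obtain ⟨n, hint, h0, h1⟩ := BishopAux.winding_factor
    ({z ∈ ball (0:ℂ) 1 | f z = 0}.ncard) f D hfc hDc hder hfs hfin le_rfl
  have h2pi : (2 * (Real.pi:ℂ) * Complex.I) ≠ 0 := by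
    simp [Real.pi_ne_zero, Complex.I_ne_zero, Complex.ofReal_ne_zero]
  have hWint : (∮ z in C(0,1), D z / f z) = 2 * Real.pi * Complex.I := by
    have hw' : (2 * (Real.pi : ℂ) * Complex.I)⁻¹ *
        (∮ z in C(0, 1), (discDeriv u z).1 / (u z).1) = 1 := hw
    have heq : (∮ z in C(0, 1), (discDeriv u z).1 / (u z).1) =
        (∮ z in C(0,1), D z / f z) := rfl
    rw [heq] at hw'
    field_simp at hw'
    linear_combination hw'
  have hn : n = 1 := by
    rw [hWint] at hint
    have hc1 : (2 * (Real.pi:ℂ) * Complex.I) * 1 = (2 * (Real.pi:ℂ) * Complex.I) * n := by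
      linear_combination hint
    have hc2 : (1:ℂ) = n := mul_left_cancel₀ h2pi hc1
    exact_mod_cast hc2.symm
  obtain ⟨a, ha, g, hgc, hgd, hgne, hfact⟩ := h1 hn
  -- Möbius argument
  set q : ℂ → ℂ := fun z => g z * (1 - (starRingEnd ℂ) a * z) with hqdef
  have hden : ∀ z ∈ closedBall (0:ℂ) 1, 1 - (starRingEnd ℂ) a * z ≠ 0 := by
    intro z hz h0'
    have haz : ‖a‖ < 1 := mem_ball_zero_iff.mp ha
    have hz1 : ‖z‖ ≤ 1 := mem_closedBall_zero_iff.mp hz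
    have h1' : ‖(starRingEnd ℂ) a * z‖ < 1 := by
      rw [norm_mul, RCLike.norm_conj]
      nlinarith [norm_nonneg a, norm_nonneg z]
    rw [sub_eq_zero] at h0'
    rw [← h0'] at h1'
    simp at h1'
  have hqc : ContinuousOn q (closedBall (0:ℂ) 1) :=
    hgc.mul (continuousOn_const.sub (continuousOn_const.mul continuousOn_id))
  have hqd : DifferentiableOn ℂ q (ball (0:ℂ) 1) :=
    hgd.mul ((differentiableOn_const _).sub ((differentiableOn_const _).mul differentiableOn_id))
  have hqne : ∀ z ∈ closedBall (0:ℂ) 1, q z ≠ 0 :=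
    fun z hz => mul_ne_zero (hgne z hz) (hden z hz)
  have hqnorm : ∀ z ∈ sphere (0:ℂ) 1, ‖q z‖ = r := by
    intro z hz
    have hz1 : ‖z‖ = 1 := mem_sphere_zero_iff_norm.mp hz
    have hzz : (starRingEnd ℂ) z * z = 1 := by
      rw [mul_comm, Complex.mul_conj']
      norm_cast
      rw [hz1]
      norm_num
    have hkey : 1 - (starRingEnd ℂ) a * z = (starRingEnd ℂ) (z - a) * z := by
      rw [map_sub, sub_mul, hzz]
    rw [hqdef]
    simp only
    rw [hkey, norm_mul, norm_mul, RCLike.norm_conj, hz1, mul_one, mul_comm, ← norm_mul,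
      ← hfact z (sphere_subset_closedBall hz)]
    exact hnorm_s z hz
  have hqconst := BishopAux.const_of_norm_sphere hrpos hqc hqd hqne hqnorm
  have h0cD : (0:ℂ) ∈ closedBall (0:ℂ) 1 := mem_closedBall_self zero_le_one
  have hCne : q 0 ≠ 0 := hqne 0 h0cD
  have hinj : ∀ z ∈ closedBall (0:ℂ) 1, ∀ w ∈ closedBall (0:ℂ) 1, f z = f w → z = w := by
    intro z hz w hw hfzw
    have e1 : g z * (1 - (starRingEnd ℂ) a * z) = q 0 := hqconst z hz
    have e2 : g w * (1 - (starRingEnd ℂ) a * w) = q 0 := hqconst w hw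
    have e3 : (z - a) * g z = (w - a) * g w := by
      rw [← hfact z hz, ← hfact w hw]
      exact hfzw
    have e4 : q 0 * ((z - a) * (1 - (starRingEnd ℂ) a * w)) =
        q 0 * ((w - a) * (1 - (starRingEnd ℂ) a * z)) := by
      linear_combination (-((1 - (starRingEnd ℂ) a * w) * (z - a))) * e1 +
        ((1 - (starRingEnd ℂ) a * z) * (w - a)) * e2 +
        ((1 - (starRingEnd ℂ) a * z) * (1 - (starRingEnd ℂ) a * w)) * e3
    have e5 := mul_left_cancel₀ hCne e4
    have e6 : (z - w) * (1 - a * (starRingEnd ℂ) a) = 0 := by linear_combination e5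
    have e7 : (1 : ℂ) - a * (starRingEnd ℂ) a ≠ 0 := by
      rw [Complex.mul_conj]
      intro hcontra
      have h8 : ((Complex.normSq a : ℝ) : ℂ) = 1 := by linear_combination -hcontra
      have h9 : Complex.normSq a = 1 := by exact_mod_cast h8
      have h10 : ‖a‖ < 1 := mem_ball_zero_iff.mp ha
      rw [Complex.normSq_eq_norm_sq] at h9
      nlinarith [norm_nonneg a]
    rcases mul_eq_zero.mp e6 with hcase | hcase
    · exact sub_eq_zero.mp hcase
    · exact absurd hcase e7
  constructor
  · intro z hz w hw huzw
    exact hinj z (sphere_subset_closedBall hz) w (sphere_subset_closedBall hw)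
      (by rw [hfdef]; simp only; rw [huzw])
  · rintro ⟨U, W, hU, hV, ⟨x, hx⟩, -, hdisj, himg⟩
    have hxU : u x ∈ u '' U := ⟨x, hx, rfl⟩
    rw [himg] at hxU
    obtain ⟨y, hy, hyx⟩ := hxU
    have hxy : y = x := by
      refine hinj y (hV.1 hy) x (hU.1 hx) ?_
      rw [hfdef]
      simp only
      rw [hyx]
    exact Set.disjoint_left.mp hdisj hx (hxy ▸ hy)
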